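/- Let a, b, c ∈ ℝ with a > 0. Suppose Λ < 0, v is a unit vector in a real inner product space, w is a vector orthogonal to v, and E is a linear map with E v = Λ v − μ w for some μ ∈ ℝ. Then ⟨E v, E v⟩ / ⟨v, E v⟩ = Λ + (μ²/Λ)‖w‖² ≤ Λ. -/

import Mathlib

open RealInnerProductSpace

section Orthogonal

variable {H : Type*} [NormedAddCommGroup H] [InnerProductSpace ℝ H] {v w : H}

theorem inner_smul_sub_smul_of_inner_eq_zero (h : ⟪v, w⟫ = 0) (a b : ℝ) :
    ⟪v, a • v - b • w⟫ = a * ‖v‖ ^ 2 := by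
  rw [inner_sub_right, real_inner_smul_right, real_inner_smul_right, h,
    real_inner_self_eq_norm_sq]
  ring

theorem norm_smul_sub_smul_sq_of_inner_eq_zero (h : ⟪v, w⟫ = 0) (a b : ℝ) :
    ‖a • v - b • w‖ ^ 2 = a ^ 2 * ‖v‖ ^ 2 + b ^ 2 * ‖w‖ ^ 2 := by
  have h' : ⟪a • v, b • w⟫ = 0 := by
    rw [real_inner_smul_left, real_inner_smul_right, h, mul_zero, mul_zero]
  rw [norm_sub_sq_real, h', mul_zero, sub_zero, norm_smul, norm_smul, mul_pow, mul_pow,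
    Real.norm_eq_abs, Real.norm_eq_abs, sq_abs, sq_abs]

theorem norm_sq_div_inner_smul_sub_smul_of_inner_eq_zero (h : ⟪v, w⟫ = 0) (hv : ‖v‖ = 1)
    {a : ℝ} (ha : a ≠ 0) (b : ℝ) :
    ‖a • v - b • w‖ ^ 2 / ⟪v, a • v - b • w⟫ = a + b ^ 2 / a * ‖w‖ ^ 2 := by
  rw [norm_smul_sub_smul_sq_of_inner_eq_zero h, inner_smul_sub_smul_of_inner_eq_zero h, hv]
  field_simp

end Orthogonal

theorem stmt_16 {H : Type*} [NormedAddCommGroup H] [InnerProductSpace ℝ H]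
    (Λ μ : ℝ) (hΛ : Λ < 0) (v w : H) (hv : ‖v‖ = 1)
    (horth : inner ℝ v w = (0 : ℝ)) (E : H →ₗ[ℝ] H)
    (hE : E v = Λ • v - μ • w) :
    (inner ℝ (E v) (E v) : ℝ) / (inner ℝ v (E v) : ℝ)
      = Λ + (μ ^ 2 / Λ) * ‖w‖ ^ 2 ∧
    Λ + (μ ^ 2 / Λ) * ‖w‖ ^ 2 ≤ Λ := by
  refine ⟨?_, add_le_of_nonpos_right ?_⟩
  · rw [real_inner_self_eq_norm_sq, hE]
    exact norm_sq_div_inner_smul_sub_smul_of_inner_eq_zero horth hv hΛ.ne μ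
  · exact mul_nonpos_of_nonpos_of_nonneg (div_nonpos_of_nonneg_of_nonpos (sq_nonneg μ) hΛ.le)
      (sq_nonneg _)
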